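/- arXiv:1102.2723 — 2 statements merged into one kernel-verified Lean document; each statement's English description precedes it below -/
import Mathlib

section
/- For every integer n ≥ 0, the Hankel determinant D_n = det((s_{i+j})_{0 ≤ i,j ≤ n}) equals (∏_{j=1}^n (p;q)_j·(q;q)_j) · q^{−(n+1)(2n+1)(2n+3)/6}. Consequently D_n/D_{n−1} = (p;q)_n·(q;q)_n·q^{−(2n+1)²/2} for n ≥ 1. -/
/-- Finite q-shifted factorial `(z;q)_n`. -/
noncomputable def qp (z q : ℝ) (n : ℕ) : ℝ := ∏ k ∈ Finset.range n, (1 - z * q ^ k)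

/-- Generalized Stieltjes–Wigert moments `s_n = (p;q)_n q^{-(n+1)²/2}`. -/
noncomputable def sw (p q : ℝ) (n : ℕ) : ℝ := qp p q n * q ^ (-(((n : ℝ) + 1) ^ 2) / 2)

/-- Hankel determinant `D_n = det (s_{i+j})_{0 ≤ i,j ≤ n}`. -/
noncomputable def hD (p q : ℝ) (n : ℕ) : ℝ :=
  (Matrix.of fun i j : Fin (n + 1) => sw p q ((i : ℕ) + (j : ℕ))).det

/-!
The moments factor as `s_{i+j} = w_i w_j q^{-ij} (p;q)_{i+j}` with `w_i = q^{(1/2 - (i+1)²)/2}`, so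
`D_n` is `∏ w_i²` times the determinant of `H(p) = ((p;q)_{i+j} q^{-ij})`. Subtracting
`(1 - p q^j)` times column `j` from column `j + 1` clears the first row of `H(p)` except for a `1`,
and since `(p;q)_{m+1} = (1 - p) (pq;q)_m` the complementary minor is `H(pq)` of one size less,
with `(1 - p)(1 - q^{i+1}) q^{-(i+1)}` pulled out of row `i` and `q^{-j}` out of column `j`.
Iterating gives `D_n = ∏_{i ≤ n} (p;q)_i (q;q)_i q^{-(2i+1)²/2}`, and both claims are read off.
-/

open Finset Matrix

lemma qp_zero (z q : ℝ) : qp z q 0 = 1 := prod_range_zero _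

lemma qp_succ (z q : ℝ) (n : ℕ) : qp z q (n + 1) = qp z q n * (1 - z * q ^ n) :=
  prod_range_succ _ _

lemma qp_succ' (z q : ℝ) (n : ℕ) : qp z q (n + 1) = (1 - z) * qp (z * q) q n := by
  simp only [qp, prod_range_succ', pow_zero, mul_one, pow_succ', mul_assoc, mul_comm]

lemma qp_pos {z q : ℝ} (hz : z < 1) (hq0 : 0 ≤ q) (hq1 : q ≤ 1) (n : ℕ) : 0 < qp z q n := by
  refine prod_pos fun k _ => ?_
  have := pow_le_one₀ hq0 hq1 (n := k)
  rcases le_or_gt z 0 with hz0 | hz0 <;> nlinarith [pow_nonneg hq0 k]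

lemma prod_range_succ_qp (z q : ℝ) (n : ℕ) :
    ∏ i ∈ range (n + 1), qp z q i = (1 - z) ^ n * ∏ i ∈ range n, qp (z * q) q i := by
  simp only [prod_range_succ', qp_zero, mul_one, qp_succ', prod_mul_distrib, prod_const,
    card_range]

lemma prod_range_pow_two_mul_add_one {M : Type*} [CommMonoid M] (a : M) (n : ℕ) :
    ∏ i ∈ range n, a ^ (2 * i + 1) = a ^ (n ^ 2) := by
  induction n with
  | zero => simp
  | succ n ih => rw [prod_range_succ, ih, ← pow_add]; congr 1; ring

lemma sum_range_two_mul_add_one_sq (n : ℕ) :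
    ∑ i ∈ range n, (2 * (i : ℝ) + 1) ^ 2 = (n : ℝ) * (2 * n - 1) * (2 * n + 1) / 3 := by
  induction n with
  | zero => simp
  | succ n ih => rw [sum_range_succ, ih]; push_cast; ring

noncomputable def reducedHankel (p q : ℝ) (n : ℕ) : Matrix (Fin (n + 1)) (Fin (n + 1)) ℝ :=
  of fun i j => qp p q (i + j) * (q ^ ((i : ℕ) * j))⁻¹

noncomputable def reducedHankelColOp (p q : ℝ) (n : ℕ) : Matrix (Fin n) (Fin n) ℝ :=
  of fun k j => if k = j then 1 else if (k : ℕ) + 1 = j then -(1 - p * q ^ (k : ℕ)) else 0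

lemma det_reducedHankelColOp (p q : ℝ) (n : ℕ) : (reducedHankelColOp p q n).det = 1 := by
  have h : (reducedHankelColOp p q n).BlockTriangular id := fun i j (hij : j < i) => by
    simp [reducedHankelColOp, hij.ne', show (i : ℕ) + 1 ≠ j by omega]
  rw [det_of_isUpperTriangular h]
  simp [reducedHankelColOp]

section ColumnReduction

variable (p : ℝ) {q : ℝ} {n : ℕ}

lemma reducedHankel_mul_reducedHankelColOp_apply_zero (i : Fin (n + 2)) :
    (reducedHankel p q (n + 1) * reducedHankelColOp p q (n + 2)) i 0 = qp p q i := by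
  simp [mul_apply, reducedHankel, reducedHankelColOp]

lemma reducedHankel_mul_reducedHankelColOp_apply_succ (hq : q ≠ 0) (i : Fin (n + 2))
    (j : Fin (n + 1)) :
    (reducedHankel p q (n + 1) * reducedHankelColOp p q (n + 2)) i j.succ
      = (1 - q ^ (i : ℕ)) * qp p q (i + j) * (q ^ ((i : ℕ) * (j + 1)))⁻¹ := by
  rw [mul_apply, Fintype.sum_eq_add j.succ j.castSucc Fin.castSucc_lt_succ.ne' fun k hk => ?_]
  · simp only [reducedHankel, reducedHankelColOp, of_apply, Fin.val_succ, Fin.val_castSucc,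
      Fin.castSucc_lt_succ.ne, ↓reduceIte, ← add_assoc, qp_succ, pow_add, mul_add, mul_one,
      _root_.mul_inv_rev, neg_sub]
    field_simp
    ring
  · simp only [reducedHankelColOp, of_apply, if_neg hk.1, Fin.val_succ, add_left_inj]
    rw [if_neg (show (k : ℕ) ≠ j from fun h => hk.2 (Fin.ext h)), mul_zero]

lemma det_reducedHankel_succ (hq : q ≠ 0) :
    (reducedHankel p q (n + 1)).det
      = (1 - p) ^ (n + 1) * qp q q (n + 1) * (q ^ ((n + 1) ^ 2))⁻¹
        * (reducedHankel (p * q) q n).det := by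
  have hsub : (reducedHankel p q (n + 1) * reducedHankelColOp p q (n + 2)).submatrix Fin.succ
      Fin.succ = of fun i j : Fin (n + 1) => (q ^ (j : ℕ))⁻¹ *
        (of fun i j : Fin (n + 1) => (1 - p) * (1 - q ^ ((i : ℕ) + 1)) * (q ^ ((i : ℕ) + 1))⁻¹ *
          reducedHankel (p * q) q n i j) i j := by
    ext i j
    rw [submatrix_apply, reducedHankel_mul_reducedHankelColOp_apply_succ p hq]
    simp only [reducedHankel, of_apply, Fin.val_succ, add_right_comm _ 1, qp_succ']
    rw [show ((i : ℕ) + 1) * ((j : ℕ) + 1) = i * j + (i + 1) + j by ring, pow_add, pow_add]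
    field_simp
    ring
  calc (reducedHankel p q (n + 1)).det
      = (reducedHankel p q (n + 1) * reducedHankelColOp p q (n + 2)).det := by
        rw [det_mul, det_reducedHankelColOp, mul_one]
    _ = ((reducedHankel p q (n + 1) * reducedHankelColOp p q (n + 2)).submatrix Fin.succ
          Fin.succ).det := by
        rw [det_succ_row_zero, Fin.sum_univ_succ]
        simp [reducedHankel_mul_reducedHankelColOp_apply_zero,
          reducedHankel_mul_reducedHankelColOp_apply_succ p hq, qp_zero]
    _ = _ := by
        have hpow : (q ^ ((n + 1) ^ 2))⁻¹
            = (∏ i ∈ range (n + 1), (q ^ i)⁻¹) * ∏ i ∈ range (n + 1), (q ^ (i + 1))⁻¹ := by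
          rw [← prod_range_pow_two_mul_add_one, ← prod_inv_distrib, ← prod_mul_distrib]
          exact prod_congr rfl fun i _ => by rw [← mul_inv, ← pow_add, two_mul, add_assoc]
        have hqp : qp q q (n + 1) = ∏ i ∈ range (n + 1), (1 - q ^ (i + 1)) :=
          prod_congr rfl fun i _ => by rw [pow_succ']
        rw [hsub, det_mul_row, det_mul_column, hpow, hqp,
          Fin.prod_univ_eq_prod_range (fun i => (q ^ i)⁻¹),
          Fin.prod_univ_eq_prod_range (fun i => (1 - p) * (1 - q ^ (i + 1)) * (q ^ (i + 1))⁻¹),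
          prod_mul_distrib, prod_mul_distrib, prod_const, card_range]
        ring

end ColumnReduction

lemma det_reducedHankel {q : ℝ} (hq : q ≠ 0) (n : ℕ) (p : ℝ) :
    (reducedHankel p q n).det = ∏ i ∈ range (n + 1), qp p q i * qp q q i * (q ^ (i ^ 2))⁻¹ := by
  induction n generalizing p with
  | zero => simp [det_unique, reducedHankel, qp_zero]
  | succ n ih =>
    rw [det_reducedHankel_succ p hq, ih, prod_mul_distrib, prod_mul_distrib, prod_mul_distrib,
      prod_mul_distrib, prod_range_succ_qp p q (n + 1), prod_range_succ (qp q q) (n + 1),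
      prod_range_succ (fun i => (q ^ (i ^ 2))⁻¹) (n + 1)]
    ring

section HankelDeterminant

variable {p q : ℝ}

noncomputable def hankelWeight (q : ℝ) (i : ℕ) : ℝ := q ^ ((1 / 2 - ((i : ℝ) + 1) ^ 2) / 2)

lemma hankelWeight_mul_hankelWeight (hq : 0 < q) (i j : ℕ) :
    hankelWeight q i * hankelWeight q j * (q ^ (i * j))⁻¹
      = q ^ (-(((i + j : ℕ) : ℝ) + 1) ^ 2 / 2) := by
  rw [hankelWeight, hankelWeight, ← Real.rpow_natCast q (i * j), ← Real.rpow_neg hq.le,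
    ← Real.rpow_add hq, ← Real.rpow_add hq]
  congr 1
  push_cast
  ring

lemma hD_eq_prod_mul_det_reducedHankel (hq : 0 < q) (n : ℕ) :
    hD p q n = (∏ i : Fin (n + 1), hankelWeight q i) *
      ((∏ j : Fin (n + 1), hankelWeight q j) * (reducedHankel p q n).det) := by
  rw [hD, ← det_mul_row, ← det_mul_column]
  congr 1
  ext i j
  simp only [of_apply, reducedHankel, sw, ← hankelWeight_mul_hankelWeight hq]
  ring

lemma hD_eq_prod_range (hq : 0 < q) (n : ℕ) :
    hD p q n = ∏ i ∈ range (n + 1), qp p q i * qp q q i * q ^ (-((2 * (i : ℝ) + 1) ^ 2) / 2) := by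
  rw [hD_eq_prod_mul_det_reducedHankel hq, det_reducedHankel hq.ne',
    Fin.prod_univ_eq_prod_range (hankelWeight q), ← prod_mul_distrib, ← prod_mul_distrib]
  refine prod_congr rfl fun i _ => ?_
  have hdiag := hankelWeight_mul_hankelWeight hq i i
  rw [← sq, Nat.cast_add, ← two_mul] at hdiag
  rw [← hdiag]
  ring

lemma hD_succ (hq : 0 < q) (n : ℕ) :
    hD p q (n + 1) = hD p q n *
      (qp p q (n + 1) * qp q q (n + 1) * q ^ (-((2 * ((n + 1 : ℕ) : ℝ) + 1) ^ 2) / 2)) := by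
  rw [hD_eq_prod_range hq, hD_eq_prod_range hq, prod_range_succ _ (n + 1)]

lemma hD_pos (hp : p < 1) (hq0 : 0 < q) (hq1 : q < 1) (n : ℕ) : 0 < hD p q n := by
  rw [hD_eq_prod_range hq0]
  exact prod_pos fun i _ => mul_pos (mul_pos (qp_pos hp hq0.le hq1.le i)
    (qp_pos hq1 hq0.le hq1.le i)) (Real.rpow_pos_of_pos hq0 _)

lemma hD_eq (hq : 0 < q) (n : ℕ) :
    hD p q n = (∏ j ∈ range n, qp p q (j + 1) * qp q q (j + 1)) *
      q ^ (-(((n : ℝ) + 1) * (2 * (n : ℝ) + 1) * (2 * (n : ℝ) + 3)) / 6) := by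
  rw [hD_eq_prod_range hq, prod_mul_distrib, prod_range_succ' (fun i => qp p q i * qp q q i),
    qp_zero, qp_zero, mul_one, mul_one, ← Real.rpow_sum_of_pos hq, ← sum_div, sum_neg_distrib,
    sum_range_two_mul_add_one_sq]
  congr 2
  push_cast
  ring

end HankelDeterminant

theorem stmt_4_general (p q : ℝ) (hp1 : p < 1) (hq0 : 0 < q) (hq1 : q < 1) :
    (∀ n : ℕ, hD p q n
        = (∏ j ∈ Finset.range n, qp p q (j + 1) * qp q q (j + 1)) *
          q ^ (-(((n : ℝ) + 1) * (2 * (n : ℝ) + 1) * (2 * (n : ℝ) + 3)) / 6)) ∧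
    (∀ n : ℕ, 1 ≤ n → hD p q n / hD p q (n - 1)
        = qp p q n * qp q q n * q ^ (-((2 * (n : ℝ) + 1) ^ 2) / 2)) := by
  refine ⟨hD_eq hq0, fun n hn => ?_⟩
  obtain ⟨m, rfl⟩ := Nat.exists_eq_add_of_le' hn
  rw [Nat.add_sub_cancel, hD_succ hq0, mul_div_cancel_left₀ _ (hD_pos hp1 hq0 hq1 m).ne']

theorem stmt_4 (p q : ℝ) (hp0 : 0 ≤ p) (hp1 : p < 1) (hq0 : 0 < q) (hq1 : q < 1) :
    (∀ n : ℕ, hD p q n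
        = (∏ j ∈ Finset.range n, qp p q (j + 1) * qp q q (j + 1)) *
          q ^ (-(((n : ℝ) + 1) * (2 * (n : ℝ) + 1) * (2 * (n : ℝ) + 3)) / 6)) ∧
    (∀ n : ℕ, 1 ≤ n → hD p q n / hD p q (n - 1)
        = qp p q n * qp q q n * q ^ (-((2 * (n : ℝ) + 1) ^ 2) / 2)) :=
  stmt_4_general p q hp1 hq0 hq1
end

section
/- Define β_n = q·(1−q^n)·(1−pq^n)/((1+q−(1+p)·q^n)·(1+q−(1+p)·q^{n+1})) for n ≥ 1 and M_n = q·Δ_n/((1+q−(1+p)·q^{n+1})·Δ_{n+1}) for n ≥ 0. Then 0 < M_n < 1 for all n ≥ 0, and β_n = M_n·(1 − M_{n−1}) for all n ≥ 1. -/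
/-- Infinite q-shifted factorial `(z;q)_∞`. -/
noncomputable def qpInf (z q : ℝ) : ℝ := ∏' k : ℕ, (1 - z * q ^ k)

/-- `Δ_n = (pq^n;q)_∞ − (q^n;q)_∞`. -/
noncomputable def Δ (p q : ℝ) (n : ℕ) : ℝ := qpInf (p * q ^ n) q - qpInf (q ^ n) q

/-- The chain sequence `β_n`. -/
noncomputable def β (p q : ℝ) (n : ℕ) : ℝ :=
  q * (1 - q ^ n) * (1 - p * q ^ n) /
    ((1 + q - (1 + p) * q ^ n) * (1 + q - (1 + p) * q ^ (n + 1)))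

/-- The maximal parameter sequence `M_n`. -/
noncomputable def Mseq (p q : ℝ) (n : ℕ) : ℝ :=
  q * Δ p q n / ((1 + q - (1 + p) * q ^ (n + 1)) * Δ p q (n + 1))

/-!
Everything rests on `(z;q)_∞ = (1 - z) (zq;q)_∞`. Iterating it twice shows that `(x q^n;q)_∞`
satisfies `(1 + q - (x + y) q^(n+1)) u_(n+1) - q u_n = (1 - x q^(n+1)) (1 - y q^(n+1)) u_(n+2)`,
which is symmetric in `x, y`; taking `{x, y} = {p, 1}` both terms of `Δ_n` satisfy the same
recurrence, and for `Δ` it says precisely that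
`1 - M_n = (1 - q^(n+1)) (1 - p q^(n+1)) Δ_(n+2) / ((1 + q - (1 + p) q^(n+1)) Δ_(n+1))`.
Since `z ↦ (z;q)_∞` is strictly decreasing on `[0, 1]`, every `Δ_n` is positive, which gives
`0 < M_n < 1`; the identity `β_n = M_n (1 - M_(n-1))` is then a rational-function identity.
-/

section QPochhammer

variable {q : ℝ}

lemma summable_norm_mul_pow (z : ℝ) (hq : |q| < 1) : Summable fun k : ℕ => ‖z * q ^ k‖ := by
  simpa [norm_mul, norm_pow] using (summable_geometric_of_lt_one (abs_nonneg q) hq).mul_left |z|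

lemma multipliable_one_sub_mul_pow (z : ℝ) (hq : |q| < 1) :
    Multipliable fun k : ℕ => 1 - z * q ^ k := by
  simpa [sub_eq_add_neg] using
    Real.multipliable_one_add_of_summable (summable_norm_mul_pow z hq).of_norm.neg

lemma qpInf_eq_one_sub_mul_qpInf (z : ℝ) (hq : |q| < 1) :
    qpInf z q = (1 - z) * qpInf (z * q) q := by
  have htail : Multipliable fun k : ℕ => 1 - z * q ^ (k + 1) := by
    convert multipliable_one_sub_mul_pow (z * q) hq using 2 with k
    ring
  rw [qpInf, tprod_eq_zero_mul' (f := fun k : ℕ => 1 - z * q ^ k) htail, qpInf, pow_zero, mul_one]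
  exact congrArg _ (tprod_congr fun k => by ring)

lemma qpInf_pos {z : ℝ} (hz0 : 0 ≤ z) (hz1 : z < 1) (hq0 : 0 ≤ q) (hq1 : q < 1) :
    0 < qpInf z q := by
  have hfactor : ∀ k : ℕ, 0 < 1 - z * q ^ k := fun k => by
    nlinarith [pow_le_one₀ hq0 hq1.le (n := k), pow_nonneg hq0 k]
  have hne : ∏' k : ℕ, (1 + -(z * q ^ k)) ≠ 0 :=
    tprod_one_add_ne_zero_of_summable (fun k => by linarith [hfactor k])
      (by simpa using summable_norm_mul_pow z (abs_lt.2 ⟨by linarith, hq1⟩))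
  simp only [← sub_eq_add_neg] at hne
  exact (tprod_nonneg fun k => (hfactor k).le).lt_of_ne' hne

lemma qpInf_le_qpInf {z w : ℝ} (hz0 : 0 ≤ z) (hzw : z ≤ w) (hw1 : w ≤ 1) (hq0 : 0 ≤ q)
    (hq1 : q < 1) : qpInf w q ≤ qpInf z q := by
  have hq : |q| < 1 := abs_lt.2 ⟨by linarith, hq1⟩
  have hfactor : ∀ k : ℕ, 0 ≤ 1 - w * q ^ k := fun k => by
    nlinarith [pow_le_one₀ hq0 hq1.le (n := k), pow_nonneg hq0 k]
  have hle : ∀ k : ℕ, 1 - w * q ^ k ≤ 1 - z * q ^ k := fun k => by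
    nlinarith [pow_nonneg hq0 k]
  exact le_of_tendsto_of_tendsto' (multipliable_one_sub_mul_pow w hq).hasProd
    (multipliable_one_sub_mul_pow z hq).hasProd fun s =>
      Finset.prod_le_prod (fun k _ => hfactor k) (fun k _ => hle k)

lemma qpInf_lt_qpInf {z w : ℝ} (hz0 : 0 ≤ z) (hzw : z < w) (hw1 : w ≤ 1) (hq0 : 0 ≤ q)
    (hq1 : q < 1) : qpInf w q < qpInf z q := by
  have hq : |q| < 1 := abs_lt.2 ⟨by linarith, hq1⟩
  have hzq : 0 < qpInf (z * q) q := qpInf_pos (by positivity) (by nlinarith) hq0 hq1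
  rw [qpInf_eq_one_sub_mul_qpInf w hq, qpInf_eq_one_sub_mul_qpInf z hq]
  calc (1 - w) * qpInf (w * q) q ≤ (1 - w) * qpInf (z * q) q :=
        mul_le_mul_of_nonneg_left
          (qpInf_le_qpInf (by positivity) (by nlinarith) (by nlinarith) hq0 hq1) (by linarith)
    _ < (1 - z) * qpInf (z * q) q := by nlinarith

lemma qpInf_three_term (x y : ℝ) (hq : |q| < 1) (n : ℕ) :
    (1 + q - (x + y) * q ^ (n + 1)) * qpInf (x * q ^ (n + 1)) q - q * qpInf (x * q ^ n) q
      = (1 - x * q ^ (n + 1)) * (1 - y * q ^ (n + 1)) * qpInf (x * q ^ (n + 2)) q := by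
  have hrec : ∀ m : ℕ, qpInf (x * q ^ m) q = (1 - x * q ^ m) * qpInf (x * q ^ (m + 1)) q :=
    fun m => by rw [qpInf_eq_one_sub_mul_qpInf _ hq, mul_assoc, ← pow_succ]
  rw [hrec n, hrec (n + 1)]
  ring

end QPochhammer

section MaximalParameterSequence

variable {p q : ℝ}

lemma Δ_three_term (hq : |q| < 1) (n : ℕ) :
    (1 + q - (1 + p) * q ^ (n + 1)) * Δ p q (n + 1) - q * Δ p q n
      = (1 - q ^ (n + 1)) * (1 - p * q ^ (n + 1)) * Δ p q (n + 2) := by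
  have hA := qpInf_three_term p 1 hq n
  have hB := qpInf_three_term 1 p hq n
  simp only [one_mul] at hB
  unfold Δ
  linear_combination hA - hB

lemma Δ_pos (hp0 : 0 ≤ p) (hp1 : p < 1) (hq0 : 0 < q) (hq1 : q < 1) (n : ℕ) :
    0 < Δ p q n :=
  sub_pos.2 <| qpInf_lt_qpInf (by positivity) (by nlinarith [pow_pos hq0 n])
    (pow_le_one₀ hq0.le hq1.le) hq0.le hq1

lemma one_add_sub_mul_pow_succ_pos (hp1 : p < 1) (hq0 : 0 ≤ q) (hq1 : q < 1) (n : ℕ) :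
    0 < 1 + q - (1 + p) * q ^ (n + 1) := by
  have hpow : q ^ (n + 1) ≤ q := pow_le_of_le_one hq0 hq1.le n.succ_ne_zero
  nlinarith [pow_nonneg hq0 (n + 1)]

lemma one_sub_Mseq (hp0 : 0 ≤ p) (hp1 : p < 1) (hq0 : 0 < q) (hq1 : q < 1) (n : ℕ) :
    1 - Mseq p q n = (1 - q ^ (n + 1)) * (1 - p * q ^ (n + 1)) * Δ p q (n + 2) /
      ((1 + q - (1 + p) * q ^ (n + 1)) * Δ p q (n + 1)) := by
  have hden : (1 + q - (1 + p) * q ^ (n + 1)) * Δ p q (n + 1) ≠ 0 :=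
    (mul_pos (one_add_sub_mul_pow_succ_pos hp1 hq0.le hq1 n) (Δ_pos hp0 hp1 hq0 hq1 _)).ne'
  rw [Mseq, one_sub_div hden, Δ_three_term (abs_lt.2 ⟨by linarith, hq1⟩)]

lemma Mseq_pos (hp0 : 0 ≤ p) (hp1 : p < 1) (hq0 : 0 < q) (hq1 : q < 1) (n : ℕ) :
    0 < Mseq p q n :=
  div_pos (mul_pos hq0 (Δ_pos hp0 hp1 hq0 hq1 n))
    (mul_pos (one_add_sub_mul_pow_succ_pos hp1 hq0.le hq1 n) (Δ_pos hp0 hp1 hq0 hq1 _))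

lemma Mseq_lt_one (hp0 : 0 ≤ p) (hp1 : p < 1) (hq0 : 0 < q) (hq1 : q < 1) (n : ℕ) :
    Mseq p q n < 1 := by
  have hpow : q ^ (n + 1) < 1 := pow_lt_one₀ hq0.le hq1 n.succ_ne_zero
  have h : 0 < 1 - Mseq p q n := by
    rw [one_sub_Mseq hp0 hp1 hq0 hq1]
    refine div_pos (mul_pos (mul_pos ?_ ?_) (Δ_pos hp0 hp1 hq0 hq1 _))
      (mul_pos (one_add_sub_mul_pow_succ_pos hp1 hq0.le hq1 n) (Δ_pos hp0 hp1 hq0 hq1 _))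
    · linarith
    · nlinarith [pow_pos hq0 (n + 1)]
  linarith

lemma β_succ_eq_Mseq_mul_one_sub_Mseq (hp0 : 0 ≤ p) (hp1 : p < 1) (hq0 : 0 < q) (hq1 : q < 1)
    (n : ℕ) : β p q (n + 1) = Mseq p q (n + 1) * (1 - Mseq p q n) := by
  have hC := one_add_sub_mul_pow_succ_pos hp1 hq0.le hq1
  have hΔ := Δ_pos hp0 hp1 hq0 hq1
  rw [one_sub_Mseq hp0 hp1 hq0 hq1, Mseq, β, div_mul_div_comm, div_eq_div_iff
    (mul_pos (hC n) (hC (n + 1))).ne'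
    (mul_pos (mul_pos (hC (n + 1)) (hΔ (n + 2))) (mul_pos (hC n) (hΔ (n + 1)))).ne']
  ring

end MaximalParameterSequence

theorem stmt_14 (p q : ℝ) (hp0 : 0 ≤ p) (hp1 : p < 1) (hq0 : 0 < q) (hq1 : q < 1) :
    (∀ n : ℕ, 0 < Mseq p q n ∧ Mseq p q n < 1) ∧
    (∀ n : ℕ, 1 ≤ n → β p q n = Mseq p q n * (1 - Mseq p q (n - 1))) := by
  refine ⟨fun n => ⟨Mseq_pos hp0 hp1 hq0 hq1 n, Mseq_lt_one hp0 hp1 hq0 hq1 n⟩, fun n hn => ?_⟩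
  obtain ⟨m, rfl⟩ := Nat.exists_eq_add_of_le' hn
  exact β_succ_eq_Mseq_mul_one_sub_Mseq hp0 hp1 hq0 hq1 m
end
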